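/- arXiv:2505.23384 — 2 statements merged into one kernel-verified Lean document; each statement's English description precedes it below -/
import Mathlib

section
/- There exist constants δ₁, δ₃ > 0 such that the following holds for all positive integers n and d. If G is an (n,d,λ)-graph with d ≤ δ₃·n and λ/d ≤ δ₁, then G contains an induced path on at least n/(48d) vertices. -/
open Finset

/-- The adjacency matrix of `G` over `ℝ` is Hermitian. -/
noncomputable def SimpleGraph.adjHermitian {n : ℕ} (G : SimpleGraph (Fin n)) :
    letI := Classical.decRel G.Adj
    ((G.adjMatrix ℝ).IsHermitian) := by
  letI := Classical.decRel G.Adj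
  rw [Matrix.IsHermitian, Matrix.conjTranspose_eq_transpose_of_trivial]
  exact G.isSymm_adjMatrix

/-- `G` is an `(n,d,λ)`-graph: a `d`-regular graph on `n` vertices all of whose
adjacency-matrix eigenvalues, except one eigenvalue equal to `d`, have absolute
value at most `lam`. -/
noncomputable def IsNDLGraph (n d : ℕ) (lam : ℝ) (G : SimpleGraph (Fin n)) : Prop :=
  letI := Classical.decRel G.Adj
  G.IsRegularOfDegree d ∧
    ∃ i₀ : Fin n, (G.adjHermitian.eigenvalues i₀ = d ∧
      ∀ i : Fin n, i ≠ i₀ → |G.adjHermitian.eigenvalues i| ≤ lam)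

/-- `G` has an induced path on `k` vertices. -/
def HasInducedPath {V : Type*} (G : SimpleGraph V) (k : ℕ) : Prop :=
  ∃ f : Fin k → V, Function.Injective f ∧
    ∀ i j : Fin k, G.Adj (f i) (f j) ↔ ((i : ℕ) + 1 = (j : ℕ) ∨ (j : ℕ) + 1 = (i : ℕ))

/-- `G` has an induced cycle of length `k`. -/
def HasInducedCycle {V : Type*} (G : SimpleGraph V) (k : ℕ) : Prop :=
  3 ≤ k ∧ ∃ f : ZMod k → V, Function.Injective f ∧
    ∀ i j : ZMod k, G.Adj (f i) (f j) ↔ (i - j = 1 ∨ j - i = 1)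

/-!
Take `δ₁ = 1/6` and `δ₃ = 1/100`, and write `N[P]` for the closed neighbourhood of a vertex set
`P`. By the expander mixing lemma, two vertex sets `A`, `B` of an `(n,d,λ)`-graph with no edges
between them satisfy `|A| |B| ≤ (λn/d)² ≤ (n/6)²`. On the other hand, Gyárfás' argument grows an
induced path `P` whose end keeps a neighbour in a component of `G - N[P ∖ end]` containing more
than half of the vertices; this can only stop when every component of `G - N[P]` has at most
`n/2` vertices. As long as `|P| < n/(48d)`, the set `V ∖ N[P]` still has at least `15n/16`
vertices, and grouping its components gives two sets of size about `7n/32` or more without edges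
between them, a contradiction.
-/

open Finset
open scoped RealInnerProductSpace

namespace OrthonormalBasis

variable {ι E : Type*} [Fintype ι] [NormedAddCommGroup E] [InnerProductSpace ℝ E]
  (b : OrthonormalBasis ι ℝ E) {T : E →ₗ[ℝ] E} {μ : ι → ℝ}

lemma inner_eq_zero_of_apply_eq_smul (hT : T.IsSymmetric) (hb : ∀ i, T (b i) = μ i • b i)
    {u : E} {c : ℝ} (hu : T u = c • u) {i : ι} (hi : μ i ≠ c) : ⟪b i, u⟫ = 0 := by
  have h : (μ i - c) * ⟪b i, u⟫ = 0 := by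
    rw [sub_mul, ← real_inner_smul_left, ← hb, hT, hu, real_inner_smul_right, sub_self]
  exact (mul_eq_zero.1 h).resolve_left (sub_ne_zero.2 hi)

lemma inner_eq_zero_of_inner_eigenvector_eq_zero [DecidableEq ι] (hT : T.IsSymmetric)
    (hb : ∀ i, T (b i) = μ i • b i) {i₀ : ι} {u : E} {c : ℝ} (hu : T u = c • u) (hu0 : u ≠ 0)
    (hμ : ∀ i ≠ i₀, μ i ≠ c) {v : E} (hv : ⟪u, v⟫ = 0) : ⟪b i₀, v⟫ = 0 := by
  have hu_eq : u = ⟪b i₀, u⟫ • b i₀ := by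
    conv_lhs => rw [← b.sum_repr' u]
    exact Fintype.sum_eq_single i₀ fun i hi => by
      rw [b.inner_eq_zero_of_apply_eq_smul hT hb hu (hμ i hi), zero_smul]
  have hc : ⟪b i₀, u⟫ ≠ 0 := fun h => hu0 (by rw [hu_eq, h, zero_smul])
  rw [hu_eq, real_inner_smul_left] at hv
  exact (mul_eq_zero.1 hv).resolve_left hc

lemma abs_inner_apply_le (hT : T.IsSymmetric) (hb : ∀ i, T (b i) = μ i • b i) {i₀ : ι}
    {lam : ℝ} (hlam : 0 ≤ lam) (hμ : ∀ i ≠ i₀, |μ i| ≤ lam) {v : E} (hv : ⟪b i₀, v⟫ = 0)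
    (w : E) : |⟪v, T w⟫| ≤ lam * (‖v‖ * ‖w‖) := by
  have hterm : ∀ i, |⟪v, b i⟫ * ⟪b i, T w⟫| ≤ lam * (|⟪b i, v⟫| * |⟪b i, w⟫|) := by
    intro i
    rw [← hT, hb, real_inner_smul_left, real_inner_comm (b i) v, abs_mul, abs_mul,
      mul_left_comm]
    by_cases hi : i = i₀
    · simp [hi, hv]
    · gcongr
      exact hμ i hi
  calc |⟪v, T w⟫| = |∑ i, ⟪v, b i⟫ * ⟪b i, T w⟫| := by rw [b.sum_inner_mul_inner]
    _ ≤ ∑ i, lam * (|⟪b i, v⟫| * |⟪b i, w⟫|) :=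
      (abs_sum_le_sum_abs _ _).trans (sum_le_sum fun i _ => hterm i)
    _ ≤ lam * (√(∑ i, |⟪b i, v⟫| ^ 2) * √(∑ i, |⟪b i, w⟫| ^ 2)) := by
      rw [← mul_sum]
      exact mul_le_mul_of_nonneg_left (Real.sum_mul_le_sqrt_mul_sqrt _ _ _) hlam
    _ = lam * (‖v‖ * ‖w‖) := by
      simp only [sq_abs, b.sum_sq_inner_right, Real.sqrt_sq (norm_nonneg _)]

end OrthonormalBasis

namespace EuclideanSpace

variable {V : Type*} [Fintype V] [DecidableEq V]

noncomputable def indicator (s : Finset V) : EuclideanSpace ℝ V :=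
  WithLp.toLp 2 fun i => if i ∈ s then 1 else 0

lemma inner_indicator (s : Finset V) (x : EuclideanSpace ℝ V) :
    ⟪indicator s, x⟫ = ∑ i ∈ s, x i := by
  simp [indicator, PiLp.inner_apply, sum_ite_mem]

lemma inner_indicator_indicator (s t : Finset V) : ⟪indicator s, indicator t⟫ = #(s ∩ t) := by
  rw [inner_indicator]
  simp [indicator]

lemma norm_indicator (s : Finset V) : ‖indicator s‖ = √(#s : ℝ) := by
  rw [norm_eq_sqrt_real_inner, inner_indicator_indicator, inter_self]

end EuclideanSpace

namespace SimpleGraph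

open EuclideanSpace

variable {V : Type*} [Fintype V] [DecidableEq V] {G : SimpleGraph V} [DecidableRel G.Adj]

lemma inner_indicator_toEuclideanLin_adjMatrix (s t : Finset V) :
    ⟪indicator s, (G.adjMatrix ℝ).toEuclideanLin (indicator t)⟫ = #(G.interedges s t) := by
  rw [inner_indicator, interedges, Rel.interedges, card_filter, sum_product]
  push_cast
  refine sum_congr rfl fun i _ => ?_
  simp [Matrix.toLpLin_apply, indicator, Matrix.mulVec, dotProduct, adjMatrix_apply]

lemma IsRegularOfDegree.toEuclideanLin_adjMatrix_indicator_univ {d : ℕ}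
    (hG : G.IsRegularOfDegree d) :
    (G.adjMatrix ℝ).toEuclideanLin (indicator univ) = (d : ℝ) • indicator univ := by
  ext i
  simp [Matrix.toLpLin_apply, indicator, adjMatrix_mulVec_apply, hG i]

end SimpleGraph

namespace IsNDLGraph

open SimpleGraph EuclideanSpace

variable {n d : ℕ} {lam : ℝ} {G : SimpleGraph (Fin n)}

lemma lam_nonneg (hG : IsNDLGraph n d lam G) (hn : 1 < n) : 0 ≤ lam := by
  obtain ⟨-, i₀, -, hμ⟩ := hG
  obtain ⟨i, hi⟩ := Fintype.exists_ne_of_one_lt_card (by simpa using hn) i₀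
  exact (abs_nonneg _).trans (hμ i hi)

/-- The expander mixing lemma. -/
theorem abs_card_interedges_sub_le [DecidableRel G.Adj] (hG : IsNDLGraph n d lam G)
    (hlam0 : 0 ≤ lam) (hlam : lam < d) (A B : Finset (Fin n)) :
    |(#(G.interedges A B) : ℝ) - d * #A * #B / n| ≤ lam * √(#A * #B) := by
  -- `IsNDLGraph` speaks about the adjacency matrix built with the classical instance.
  rw [show G.interedges A B = @interedges _ G (Classical.decRel G.Adj) A B by convert rfl]
  let := Classical.decRel G.Adj
  obtain ⟨hreg, i₀, -, hμ⟩ := hG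
  have hn : (n : ℝ) ≠ 0 := by have := i₀.pos; positivity
  set T := Matrix.toEuclideanLin (G.adjMatrix ℝ)
  set b := G.adjHermitian.eigenvectorBasis
  have hT : T.IsSymmetric := Matrix.isSymmetric_toEuclideanLin_iff.mpr G.adjHermitian
  have hb : ∀ i, T (b i) = G.adjHermitian.eigenvalues i • b i := fun i => by
    simp only [T, Matrix.toLpLin_apply, b, G.adjHermitian.mulVec_eigenvectorBasis]
    rfl
  set u : EuclideanSpace ℝ (Fin n) := indicator univ
  have hu : T u = (d : ℝ) • u := hreg.toEuclideanLin_adjMatrix_indicator_univ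
  have hu0 : u ≠ 0 := fun h => by simpa [u, indicator] using congr(WithLp.ofLp $h i₀)
  set v := indicator A - (#A / n : ℝ) • u
  have hv : ⟪u, v⟫ = 0 := by
    simp only [v, u, inner_sub_right, real_inner_smul_right, inner_indicator_indicator,
      univ_inter, card_univ, Fintype.card_fin]
    field_simp
    ring
  -- The spectral gap forces the all-ones vector `u` to span the eigenline of `b i₀`.
  have hvb : ⟪b i₀, v⟫ = 0 := b.inner_eq_zero_of_inner_eigenvector_eq_zero hT hb hu hu0
    (fun i hi h => (hμ i hi).not_gt (by rwa [h, Nat.abs_cast])) hv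
  have hvT : ⟪v, T (indicator B)⟫ = #(G.interedges A B) - d * #A * #B / n := by
    rw [inner_sub_left, real_inner_smul_left, inner_indicator_toEuclideanLin_adjMatrix, ← hT, hu,
      real_inner_smul_left, inner_indicator_indicator, univ_inter]
    ring
  have hv_le : ‖v‖ ≤ ‖indicator A‖ := by
    have := norm_add_sq_eq_norm_sq_add_norm_sq_real (x := v) (y := (#A / n : ℝ) • u)
      (by rw [real_inner_comm, real_inner_smul_left, hv, mul_zero])
    rw [sub_add_cancel] at this
    nlinarith [norm_nonneg v, norm_nonneg (indicator A), sq_nonneg ‖(#A / n : ℝ) • u‖]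
  calc _ = |⟪v, T (indicator B)⟫| := by rw [hvT]
    _ ≤ lam * (‖v‖ * ‖indicator B‖) := b.abs_inner_apply_le hT hb hlam0 hμ hvb _
    _ ≤ lam * (‖indicator A‖ * ‖indicator B‖) := by gcongr
    _ = lam * √(#A * #B) := by
      rw [norm_indicator, norm_indicator, Real.sqrt_mul (Nat.cast_nonneg _)]

theorem card_mul_card_le_of_forall_not_adj (hG : IsNDLGraph n d lam G) (hlam0 : 0 ≤ lam)
    (hlam : lam < d) {A B : Finset (Fin n)} (hAB : ∀ a ∈ A, ∀ b ∈ B, ¬ G.Adj a b) :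
    (#A * #B : ℝ) ≤ (lam * n / d) ^ 2 := by
  classical
  have hn : (0 : ℝ) < n := by obtain ⟨-, i₀, -⟩ := hG; exact_mod_cast i₀.pos
  have hd : (0 : ℝ) < d := hlam0.trans_lt hlam
  have hmix := hG.abs_card_interedges_sub_le hlam0 hlam A B
  have hempty : G.interedges A B = ∅ :=
    eq_empty_of_forall_notMem fun ⟨a, b⟩ h => by
      obtain ⟨ha, hb, hab⟩ := Rel.mk_mem_interedges_iff.1 h
      exact hAB a ha b hb hab
  rw [hempty, card_empty, Nat.cast_zero, zero_sub, abs_neg, abs_of_nonneg (by positivity),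
    div_le_iff₀ hn] at hmix
  set s := √(#A * #B : ℝ)
  have hs : s ^ 2 = #A * #B := Real.sq_sqrt (by positivity)
  have hds : d * s ≤ lam * n := by
    by_contra! hlt
    have hs0 : 0 < s := pos_of_mul_pos_right ((by positivity : 0 ≤ lam * n).trans_lt hlt) hd.le
    nlinarith [mul_lt_mul_of_pos_right hlt hs0]
  rw [← hs]
  exact pow_le_pow_left₀ (Real.sqrt_nonneg _) (by rwa [le_div_iff₀ hd, mul_comm]) 2

end IsNDLGraph

namespace SimpleGraph
variable {V : Type*} (G : SimpleGraph V)

section Closed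
variable [DecidableEq V]

/-- `S` is a union of connected components of the induced subgraph `G[R]`. -/
def IsClosedIn (R S : Finset V) : Prop := S ⊆ R ∧ ∀ x ∈ S, ∀ y ∈ R, G.Adj x y → y ∈ S

/-- A connected component of `G[R]`. -/
def IsComponentIn (R C : Finset V) : Prop := Minimal (fun S => S.Nonempty ∧ G.IsClosedIn R S) C

variable {G}

lemma IsClosedIn.sdiff {R S T : Finset V} (hS : G.IsClosedIn R S) (hT : G.IsClosedIn R T) :
    G.IsClosedIn R (S \ T) := by
  refine ⟨sdiff_subset.trans hS.1, fun x hx y hy hxy => ?_⟩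
  rw [mem_sdiff] at hx ⊢
  exact ⟨hS.2 x hx.1 y hy hxy, fun hyT => hx.2 (hT.2 y hyT x (hS.1 hx.1) hxy.symm)⟩

lemma IsClosedIn.sdiff_sdiff {R T : Finset V} (hT : G.IsClosedIn R T) (S : Finset V) :
    G.IsClosedIn (R \ S) (T \ S) := by
  refine ⟨sdiff_subset_sdiff hT.1 le_rfl, fun x hx y hy hxy => ?_⟩
  rw [mem_sdiff] at hx hy ⊢
  exact ⟨hT.2 x hx.1 y hy.1 hxy, hy.2⟩

lemma IsClosedIn.union_of_sdiff {R S A : Finset V} (hS : G.IsClosedIn R S)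
    (hA : G.IsClosedIn (R \ S) A) : G.IsClosedIn R (A ∪ S) := by
  refine ⟨union_subset (hA.1.trans sdiff_subset) hS.1, fun x hx y hy hxy => ?_⟩
  rw [mem_union] at hx ⊢
  rcases hx with hx | hx
  · by_cases hyS : y ∈ S
    · exact absurd (hS.2 y hyS x (sdiff_subset (hA.1 hx)) hxy.symm) (mem_sdiff.1 (hA.1 hx)).2
    · exact .inl (hA.2 x hx y (mem_sdiff.2 ⟨hy, hyS⟩) hxy)
  · exact .inr (hS.2 x hx y hy hxy)

lemma exists_isComponentIn_mem {R : Finset V} {u : V} (hu : u ∈ R) :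
    ∃ C, G.IsComponentIn R C ∧ u ∈ C := by
  -- A minimal closed set containing `u` is a component, since `C ∖ S` is closed for closed `S`.
  obtain ⟨C, -, hC⟩ := exists_minimal_le_of_wellFoundedLT (fun S => G.IsClosedIn R S ∧ u ∈ S) R
    ⟨⟨subset_rfl, fun _ _ _ hy _ => hy⟩, hu⟩
  refine ⟨C, ⟨⟨⟨u, hC.1.2⟩, hC.1.1⟩, fun S ⟨hSne, hS⟩ hSC => ?_⟩, hC.1.2⟩
  by_cases huS : u ∈ S
  · exact hC.2 ⟨hS, huS⟩ hSC
  · obtain ⟨x, hx⟩ := hSne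
    have := hC.2 ⟨hC.1.1.sdiff hS, mem_sdiff.2 ⟨hC.1.2, huS⟩⟩ sdiff_subset (hSC hx)
    exact absurd hx (mem_sdiff.1 this).2

lemma IsComponentIn.exists_adj [Fintype V] {R R' C D : Finset V} (hC : G.IsComponentIn R C)
    (hD : G.IsClosedIn R' D) (hcard : Fintype.card V < #C + #D)
    (hCR' : ¬ C ⊆ R') : ∃ y ∈ D, ∃ z ∈ C, z ∉ R' ∧ G.Adj y z := by
  -- Otherwise `C ∩ D`, which is nonempty by counting, would be closed in `R`.
  by_contra! h
  have hCD : (C ∩ D).Nonempty := by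
    rw [← card_pos]
    have := card_union_add_card_inter C D
    have := card_le_univ (C ∪ D)
    omega
  have hclosed : G.IsClosedIn R (C ∩ D) := by
    refine ⟨inter_subset_left.trans hC.1.2.1, fun x hx y hy hxy => ?_⟩
    rw [mem_inter] at hx ⊢
    have hyC := hC.1.2.2 x hx.1 y hy hxy
    by_cases hyR' : y ∈ R'
    · exact ⟨hyC, hD.2 x hx.2 y hyR' hxy⟩
    · exact absurd hxy (h x hx.2 y hyC hyR')
  exact hCR' ((hC.2 ⟨hCD, hclosed⟩ inter_subset_left).trans (inter_subset_right.trans hD.1))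

theorem exists_isClosedIn_card_mem_Icc (c : ℕ) (R : Finset V)
    (hcover : ∀ u ∈ R, ∃ S, G.IsClosedIn R S ∧ u ∈ S ∧ #S ≤ c) {m : ℕ} (hm : m ≤ #R) :
    ∃ A, G.IsClosedIn R A ∧ m ≤ #A ∧ #A ≤ m + c := by
  induction R using Finset.strongInduction generalizing m with
  | H R ih =>
  obtain rfl | hm0 := Nat.eq_zero_or_pos m
  · exact ⟨∅, ⟨empty_subset _, by simp⟩, by simp⟩
  obtain ⟨u, hu⟩ := card_pos.1 (hm0.trans_le hm)
  obtain ⟨S, hS, huS, hSc⟩ := hcover u hu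
  by_cases hmS : m ≤ #S
  · exact ⟨S, hS, hmS, by omega⟩
  have hcard : #(R \ S) = #R - #S := card_sdiff_of_subset hS.1
  obtain ⟨A, hA, hmA, hAc⟩ := ih (R \ S) (sdiff_ssubset hS.1 ⟨u, huS⟩)
    (fun v hv => by
      obtain ⟨T, hT, hvT, hTc⟩ := hcover v (mem_sdiff.1 hv).1
      exact ⟨T \ S, hT.sdiff_sdiff S, mem_sdiff.2 ⟨hvT, (mem_sdiff.1 hv).2⟩,
        (card_le_card sdiff_subset).trans hTc⟩)
    (m := m - #S) (by omega)
  have hdisj : Disjoint A S := disjoint_of_subset_left hA.1 sdiff_disjoint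
  exact ⟨A ∪ S, hS.union_of_sdiff hA, by rw [card_union_of_disjoint hdisj]; omega,
    by rw [card_union_of_disjoint hdisj]; omega⟩

end Closed

def IsInducedPath (P : List V) : Prop :=
  P.Nodup ∧ ∀ (i j : ℕ) (hi : i < P.length) (hj : j < P.length),
    G.Adj P[i] P[j] ↔ (i + 1 = j ∨ j + 1 = i)

section
variable {G}

lemma IsInducedPath.hasInducedPath {P : List V} (h : G.IsInducedPath P) :
    HasInducedPath G P.length :=
  ⟨fun i => P[i], fun _ _ hij => List.nodup_iff_injective_get.1 h.1 hij,
    fun i j => h.2 i j i.2 j.2⟩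

lemma isInducedPath_singleton (a : V) : G.IsInducedPath [a] :=
  ⟨List.nodup_singleton a, fun i j hi hj => by
    simp only [List.length_singleton, Nat.lt_one_iff] at hi hj
    subst hi hj
    simp⟩

end

variable [Fintype V] [DecidableEq V] [DecidableRel G.Adj]

/-- `V ∖ N[P]`, the vertices at distance at least two from `P`. -/
def farFrom (P : List V) : Finset V := {x | ∀ v ∈ P, x ≠ v ∧ ¬ G.Adj v x}

variable {G}

@[simp]
lemma mem_farFrom {P : List V} {x : V} : x ∈ G.farFrom P ↔ ∀ v ∈ P, x ≠ v ∧ ¬ G.Adj v x := by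
  simp [farFrom]

@[simp]
lemma farFrom_nil : G.farFrom [] = univ := by
  ext; simp

lemma card_le_card_farFrom_add {d : ℕ} (hdeg : ∀ v, G.degree v ≤ d) (P : List V) :
    Fintype.card V ≤ #(G.farFrom P) + P.length * (d + 1) := by
  have hsub : (G.farFrom P)ᶜ ⊆ P.toFinset.biUnion fun v => insert v (G.neighborFinset v) := by
    intro x hx
    simp only [mem_compl, mem_farFrom, not_forall, not_and_or, not_not] at hx
    obtain ⟨v, hv, hxv⟩ := hx
    simp only [mem_biUnion, List.mem_toFinset, mem_insert, mem_neighborFinset]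
    exact ⟨v, hv, hxv⟩
  calc Fintype.card V = #(G.farFrom P) + #(G.farFrom P)ᶜ := (card_add_card_compl _).symm
    _ ≤ #(G.farFrom P) + ∑ v ∈ P.toFinset, (d + 1) := by
      gcongr
      refine (card_le_card hsub).trans (card_biUnion_le.trans (sum_le_sum fun v _ => ?_))
      exact (card_insert_le _ _).trans (by simpa using hdeg v)
    _ ≤ #(G.farFrom P) + P.length * (d + 1) := by
      rw [sum_const, smul_eq_mul]
      gcongr
      exact P.toFinset_card_le

lemma adj_getElem_cons_iff {z a : V} {t : List V} (hza : G.Adj z a) (hz : z ∈ G.farFrom t)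
    (j : ℕ) (hj : j < (a :: t).length) : G.Adj z (a :: t)[j] ↔ j = 0 := by
  rcases j with _ | j
  · simpa using hza
  · simp only [List.getElem_cons_succ, Nat.add_one_ne_zero, iff_false]
    exact fun h => ((mem_farFrom.1 hz) _ (List.getElem_mem _)).2 h.symm

lemma IsInducedPath.cons {z a : V} {t : List V} (h : G.IsInducedPath (a :: t))
    (hza : G.Adj z a) (hz : z ∈ G.farFrom t) : G.IsInducedPath (z :: a :: t) := by
  refine ⟨List.nodup_cons.2 ⟨?_, h.1⟩, fun i j hi hj => ?_⟩
  · rintro (_ | ⟨_, hzt⟩)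
    · exact G.irrefl hza
    · exact ((mem_farFrom.1 hz) z hzt).1 rfl
  rcases i with _ | i <;> rcases j with _ | j
  · simp
  · simp [adj_getElem_cons_iff hza hz]
  · simp [G.adj_comm _ z, adj_getElem_cons_iff hza hz]
  · simp only [List.getElem_cons_succ, h.2 i j]
    omega

variable (G) in
/-- The invariant of Gyárfás' argument: some component of `G[V ∖ N[t]]` with more than half of
the vertices meets `N[a]`, where `a` is the end at which the path grows. -/
def IsExtendablePath (a : V) (t : List V) : Prop :=
  G.IsInducedPath (a :: t) ∧ ∃ C, G.IsComponentIn (G.farFrom t) C ∧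
    Fintype.card V < 2 * #C ∧ ¬ C ⊆ G.farFrom (a :: t)

lemma exists_isExtendablePath_nil {C : Finset V} (hC : G.IsComponentIn univ C)
    (hcard : Fintype.card V < 2 * #C) : ∃ a, G.IsExtendablePath a [] := by
  obtain ⟨a, ha⟩ := hC.1.1
  exact ⟨a, isInducedPath_singleton a, C, by rwa [farFrom_nil], hcard,
    fun h => by simpa using h ha⟩

lemma IsExtendablePath.exists_cons {a : V} {t : List V} (h : G.IsExtendablePath a t)
    {D : Finset V} (hD : G.IsComponentIn (G.farFrom (a :: t)) D)
    (hcard : Fintype.card V < 2 * #D) : ∃ z, G.IsExtendablePath z (a :: t) := by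
  obtain ⟨hpath, C, hC, hCcard, hCa⟩ := h
  obtain ⟨y, hyD, z, hzC, hz, hyz⟩ := hC.exists_adj hD.1.2 (by omega) hCa
  have hy := mem_farFrom.1 (hD.1.2.1 hyD)
  have hzt := hC.1.2.1 hzC
  have haz : G.Adj a z := by
    by_contra haz
    refine hz (mem_farFrom.2 fun v hv => ?_)
    rcases List.mem_cons.1 hv with rfl | hv
    · exact ⟨fun hza => (hy v List.mem_cons_self).2 (hza ▸ hyz.symm), haz⟩
    · exact mem_farFrom.1 hzt v hv
  refine ⟨z, hpath.cons haz.symm hzt, D, hD, hcard, fun hDz => ?_⟩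
  exact (mem_farFrom.1 (hDz hyD) z List.mem_cons_self).2 hyz.symm

variable (G) in
theorem exists_isExtendablePath_or_small_components (k : ℕ) :
    (∃ a t, t.length = k ∧ G.IsExtendablePath a t) ∨
      ∃ P, P.length ≤ k ∧ G.IsInducedPath P ∧
        ∀ C, G.IsComponentIn (G.farFrom P) C → 2 * #C ≤ Fintype.card V := by
  induction k with
  | zero =>
    by_cases hbig : ∃ C, G.IsComponentIn univ C ∧ Fintype.card V < 2 * #C
    · obtain ⟨C, hC, hcard⟩ := hbig
      obtain ⟨a, ha⟩ := exists_isExtendablePath_nil hC hcard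
      exact .inl ⟨a, [], rfl, ha⟩
    · push Not at hbig
      exact .inr ⟨[], le_rfl, ⟨List.nodup_nil, by simp⟩, by simpa using hbig⟩
  | succ k ih =>
    rcases ih with ⟨a, t, rfl, h⟩ | ⟨P, hP, hpath, hsmall⟩
    · by_cases hbig : ∃ D, G.IsComponentIn (G.farFrom (a :: t)) D ∧ Fintype.card V < 2 * #D
      · obtain ⟨D, hD, hcard⟩ := hbig
        obtain ⟨z, hz⟩ := h.exists_cons hD hcard
        exact .inl ⟨z, a :: t, rfl, hz⟩
      · push Not at hbig
        exact .inr ⟨a :: t, le_rfl, h.1, hbig⟩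
    · exact .inr ⟨P, hP.trans k.le_succ, hpath, hsmall⟩

theorem hasInducedPath_of_bipartite_holes {d k : ℕ} (hdeg : ∀ v, G.degree v ≤ d)
    (hholes : ∀ A B : Finset V, (∀ a ∈ A, ∀ b ∈ B, ¬ G.Adj a b) →
      36 * (#A * #B) ≤ Fintype.card V ^ 2)
    (hk : 16 * (k * (d + 1)) ≤ Fintype.card V) : HasInducedPath G k := by
  rcases k with _ | k
  · exact ⟨Fin.elim0, fun i => i.elim0, fun i => i.elim0⟩
  rcases G.exists_isExtendablePath_or_small_components k with ⟨a, t, ht, h⟩ | ⟨P, hP, -, hsmall⟩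
  · simpa [ht] using h.1.hasInducedPath
  set n := Fintype.card V
  set R := G.farFrom P
  have hR : n ≤ #R + k * (d + 1) :=
    (card_le_card_farFrom_add hdeg P).trans (by gcongr)
  have hk' : 16 * (k * (d + 1)) + 16 ≤ n := by nlinarith
  -- Group components of `G[R]` into `A` with `⌊7n/32⌋ ≤ |A| ≤ ⌊7n/32⌋ + n/2`; as `|R| ≥ 15n/16`,
  -- also `|R ∖ A| ≥ 7n/32`, and `36 ⌊7n/32⌋ (7n/32) > n²` once `n ≥ 16`.
  obtain ⟨A, hA, hmA, hAm⟩ := exists_isClosedIn_card_mem_Icc (n / 2) R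
    (fun u hu => by
      obtain ⟨C, hC, huC⟩ := exists_isComponentIn_mem hu
      exact ⟨C, hC.1.2, huC, by have := hsmall C hC; omega⟩)
    (m := 7 * n / 32) (by omega)
  have hAB := hholes A (R \ A) fun a ha b hb hab =>
    (mem_sdiff.1 hb).2 (hA.2 a ha b (mem_sdiff.1 hb).1 hab)
  have hRA : #A ≤ #R := card_le_card hA.1
  rw [card_sdiff_of_subset hA.1] at hAB
  set b := #R - #A
  have h1 : 7 * n ≤ 32 * #A + 31 := by omega
  have h2 : 7 * n ≤ 32 * b := by omega
  have hn : 16 ≤ n := by omega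
  nlinarith [Nat.mul_le_mul_left (#A) h2, Nat.mul_le_mul_right (7 * n) h1, Nat.mul_le_mul_left n hn]

end SimpleGraph

lemma sixteen_mul_ceil_div_mul_le {n d : ℕ} (hd : 0 < d) (hdn : 100 * d ≤ n) :
    16 * (⌈(n : ℝ) / (48 * d)⌉₊ * (d + 1)) ≤ n := by
  set K := ⌈(n : ℝ) / (48 * d)⌉₊
  have hd1 : (1 : ℝ) ≤ d := by exact_mod_cast hd
  have hdn' : (100 * d : ℝ) ≤ n := by exact_mod_cast hdn
  have hK : ((K : ℝ) - 1) * (48 * d) < n :=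
    (lt_div_iff₀ (by positivity)).1 (by linarith [Nat.ceil_lt_add_one (by positivity :
      (0 : ℝ) ≤ n / (48 * d))])
  have : (16 : ℝ) * (K * (d + 1)) ≤ n := by nlinarith [mul_nonneg K.cast_nonneg (sub_nonneg.2 hd1)]
  exact_mod_cast this

/-- There exist constants `δ₁, δ₃ > 0` such that every `(n,d,λ)`-graph `G`
with `d ≤ δ₃ n` and `λ/d ≤ δ₁` contains an induced path on at least `n/(48 d)` vertices. -/
theorem long_induced_path_in_ndl_graph :
    ∃ δ₁ > (0 : ℝ), ∃ δ₃ > (0 : ℝ),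
      ∀ (n d : ℕ), 0 < n → 0 < d →
        ∀ (lam : ℝ) (G : SimpleGraph (Fin n)),
          IsNDLGraph n d lam G → (d : ℝ) ≤ δ₃ * n → lam / d ≤ δ₁ →
            ∃ k : ℕ, (n : ℝ) / (48 * d) ≤ (k : ℝ) ∧ HasInducedPath G k := by
  refine ⟨1 / 6, by norm_num, 1 / 100, by norm_num, fun n d _ hd lam G hG hdn hlam => ?_⟩
  classical
  have hd' : (0 : ℝ) < d := by exact_mod_cast hd
  have h100 : 100 * d ≤ n := by exact_mod_cast (by linarith : (100 * d : ℝ) ≤ n)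
  have hlam6 : lam ≤ d / 6 := by rw [div_le_iff₀ hd'] at hlam; linarith
  have hlam0 : 0 ≤ lam := hG.lam_nonneg (by omega)
  have hratio : lam * n / d ≤ n / 6 := by rw [div_le_iff₀ hd']; nlinarith
  refine ⟨_, Nat.le_ceil _, G.hasInducedPath_of_bipartite_holes (fun v => (hG.1 v).le)
    (fun A B hAB => ?_) (by simpa using sixteen_mul_ceil_div_mul_le hd h100)⟩
  have hAB := hG.card_mul_card_le_of_forall_not_adj hlam0 (by linarith) hAB
  have : (lam * n / d) ^ 2 ≤ (n / 6 : ℝ) ^ 2 := pow_le_pow_left₀ (by positivity) hratio 2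
  rw [Fintype.card_fin]
  exact_mod_cast (by nlinarith : (36 * (#A * #B) : ℝ) ≤ n ^ 2)
end

section
/- There exist ε₀ ∈ (0, 1/2) and a constant C > 0 such that for every ε ∈ (0, ε₀) the equation x = (1+ε)(1 − e^{−x}) has a unique solution x = x(ε) in the open interval (0,1), and this solution satisfies |x(ε) − (2ε − 2ε²/3)| ≤ C·ε³; in particular, ε·x(ε) − x(ε)²/2 ≤ C·ε³. -/
open Real

private lemma exp_neg_taylor' {z : ℝ} (h0 : 0 ≤ z) (h1 : z ≤ 1) :
    |Real.exp (-z) - (1 - z + z^2/2 - z^3/6)| ≤ 5/96 * z^4 := by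
  have h := Real.exp_bound (x := -z) (by rwa [abs_neg, abs_of_nonneg h0]) (n := 4) (by norm_num)
  simp [Finset.sum_range_succ, abs_neg, abs_of_nonneg h0, Nat.factorial] at h
  calc |Real.exp (-z) - (1 - z + z^2/2 - z^3/6)|
      = |rexp (-z) - (1 + -z + z ^ 2 / 2 + (-z) ^ 3 / 6)| := by ring_nf
    _ ≤ z ^ 4 * (5 / (24 * 4)) := by convert h using 3
    _ = 5/96 * z^4 := by ring

private lemma polyv' {ε : ℝ} (h0 : 0 < ε) (h1 : ε < 1/1000) :
    (1+ε)*((2*ε - 2*ε^2/3 + 100*ε^3) - (2*ε - 2*ε^2/3 + 100*ε^3)^2/2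
      + (2*ε - 2*ε^2/3 + 100*ε^3)^3/6 + 5/96*(2*ε - 2*ε^2/3 + 100*ε^3)^4)
      < (2*ε - 2*ε^2/3 + 100*ε^3) := by
  have he : ε ≤ 1/1000 := h1.le
  have hk : ∀ k : ℕ, ε^k ≤ (1/1000:ℝ)^k := fun k => pow_le_pow_left₀ h0.le he k
  have hp : ∀ k : ℕ, (0:ℝ) ≤ ε^k := fun k => pow_nonneg h0.le k
  have hW : (0:ℝ) < 1765/18 - 1175/18*ε + 380713/81*ε^2 - 396031/81*ε^3 - 9271745/486*ε^4
      - 81429005/486*ε^5 - 46687000/81*ε^6 - 837500/3*ε^7 - 45625000/9*ε^8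
      - 15625000/3*ε^9 := by
    have := hk 1; have := hk 3; have := hk 4; have := hk 5; have := hk 6; have := hk 7
    have := hk 8; have := hk 9; have := hp 2
    norm_num at *
    nlinarith [this]
  nlinarith [mul_pos (pow_pos h0 4) hW]

private lemma polyu' {ε : ℝ} (h0 : 0 < ε) (h1 : ε < 1/1000) :
    (2*ε - 2*ε^2/3 - 100*ε^3) < (1+ε)*((2*ε - 2*ε^2/3 - 100*ε^3)
      - (2*ε - 2*ε^2/3 - 100*ε^3)^2/2 + (2*ε - 2*ε^2/3 - 100*ε^3)^3/6
      - 5/96*(2*ε - 2*ε^2/3 - 100*ε^3)^4) := by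
  have he : ε ≤ 1/1000 := h1.le
  have hk : ∀ k : ℕ, ε^k ≤ (1/1000:ℝ)^k := fun k => pow_le_pow_left₀ h0.le he k
  have hp : ∀ k : ℕ, (0:ℝ) ≤ ε^k := fun k => pow_nonneg h0.le k
  have hW : (0:ℝ) < 1805/18 - 135/2*ε - 402223/81*ε^2 + 137987/27*ε^3 - 2899745/486*ε^4
      - 84621005/486*ε^5 + 20812000/81*ε^6 + 2487500/9*ε^7 - 48125000/9*ε^8
      - 15625000/3*ε^9 := by
    have := hk 1; have := hk 2; have := hk 4; have := hk 5
    have := hk 8; have := hk 9; have := hp 3; have := hp 6; have := hp 7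
    norm_num at *
    nlinarith [this]
  nlinarith [mul_pos (pow_pos h0 4) hW]

private lemma uniq_root' {ε a b : ℝ} (hε : 0 < ε) (ha : 0 < a) (hb : 0 < b)
    (hra : a = (1+ε)*(1-Real.exp (-a))) (hrb : b = (1+ε)*(1-Real.exp (-b))) :
    ¬ (a < b) := by
  intro hab
  set t : ℝ := a / b with ht
  have hbne : b ≠ 0 := hb.ne'
  have htb : t * b = a := div_mul_cancel₀ a hbne
  have ht0 : 0 < t := div_pos ha hb
  have ht1 : t < 1 := (div_lt_one hb).2 hab
  have hconv := strictConvexOn_exp.2 (Set.mem_univ (0:ℝ)) (Set.mem_univ (-b))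
    (by intro h; exact absurd h.symm (neg_lt_zero.2 hb).ne) (by linarith : (0:ℝ) < 1 - t) ht0
    (by ring)
  simp only [smul_eq_mul, mul_zero, zero_add, Real.exp_zero, mul_one] at hconv
  have hta : t * -b = -a := by rw [mul_neg, htb]
  rw [hta] at hconv
  have h2 : (1+ε) * Real.exp (-a) < (1+ε) * ((1 - t) + t * Real.exp (-b)) := by
    have : (0:ℝ) < 1 + ε := by linarith
    exact (mul_lt_mul_iff_right₀ this).2 hconv
  have h3 : t * b = t * ((1+ε)*(1-Real.exp (-b))) := by rw [← hrb]
  nlinarith [h2, h3, hra, htb]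

set_option maxHeartbeats 1000000 in
/-- There are `ε₀ ∈ (0, 1/2)` and `C > 0` such that for every `ε ∈ (0, ε₀)` the equation
`x = (1+ε)(1-e^{-x})` has a unique solution `x(ε)` in `(0,1)`, and this solution
satisfies `|x(ε) - (2ε - 2ε²/3)| ≤ C ε³`; in particular `ε x(ε) - x(ε)²/2 ≤ C ε³`. -/
theorem unique_solution_asymptotics :
    ∃ ε₀ : ℝ, 0 < ε₀ ∧ ε₀ < 1 / 2 ∧ ∃ C > (0 : ℝ),
      ∀ ε : ℝ, 0 < ε → ε < ε₀ →
        (∃! x : ℝ, x ∈ Set.Ioo (0 : ℝ) 1 ∧ x = (1 + ε) * (1 - Real.exp (-x))) ∧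
        ∀ x : ℝ, x ∈ Set.Ioo (0 : ℝ) 1 → x = (1 + ε) * (1 - Real.exp (-x)) →
          |x - (2 * ε - 2 * ε ^ 2 / 3)| ≤ C * ε ^ 3 ∧
            ε * x - x ^ 2 / 2 ≤ C * ε ^ 3 := by
  refine ⟨1/1000, by norm_num, by norm_num, 100, by norm_num, fun ε h0 h1 => ?_⟩
  have hε2 : (0:ℝ) < ε^2 := pow_pos h0 2
  have hε3 : (0:ℝ) < ε^3 := pow_pos h0 3
  have hsmall : (0:ℝ) < ε * (1/1000 - ε) := mul_pos h0 (by linarith)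
  have hsmall2 : (0:ℝ) < ε^2 * (1/1000 - ε) := mul_pos hε2 (by linarith)
  have hu0 : 0 < 2*ε - 2*ε^2/3 - 100*ε^3 := by nlinarith
  have huv : 2*ε - 2*ε^2/3 - 100*ε^3 < 2*ε - 2*ε^2/3 + 100*ε^3 := by nlinarith
  have hv1 : 2*ε - 2*ε^2/3 + 100*ε^3 < 1 := by nlinarith
  have h1ε : (0:ℝ) < 1 + ε := by linarith
  have hexpu := exp_neg_taylor' hu0.le (by linarith)
  have hexpv := exp_neg_taylor' (by nlinarith : (0:ℝ) ≤ 2*ε - 2*ε^2/3 + 100*ε^3) hv1.le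
  rw [abs_le] at hexpu hexpv
  have hHu : 2*ε - 2*ε^2/3 - 100*ε^3
      < (1+ε) * (1 - Real.exp (-(2*ε - 2*ε^2/3 - 100*ε^3))) := by
    have h1' : Real.exp (-(2*ε - 2*ε^2/3 - 100*ε^3)) ≤ 1 - (2*ε - 2*ε^2/3 - 100*ε^3)
        + (2*ε - 2*ε^2/3 - 100*ε^3)^2/2 - (2*ε - 2*ε^2/3 - 100*ε^3)^3/6
        + 5/96*(2*ε - 2*ε^2/3 - 100*ε^3)^4 := by linarith [hexpu.2]
    have hmul := mul_le_mul_of_nonneg_left h1' h1ε.le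
    calc 2*ε - 2*ε^2/3 - 100*ε^3
        < (1+ε)*((2*ε - 2*ε^2/3 - 100*ε^3) - (2*ε - 2*ε^2/3 - 100*ε^3)^2/2
            + (2*ε - 2*ε^2/3 - 100*ε^3)^3/6 - 5/96*(2*ε - 2*ε^2/3 - 100*ε^3)^4) :=
          polyu' h0 h1
      _ = (1+ε) - (1+ε)*(1 - (2*ε - 2*ε^2/3 - 100*ε^3) + (2*ε - 2*ε^2/3 - 100*ε^3)^2/2
            - (2*ε - 2*ε^2/3 - 100*ε^3)^3/6 + 5/96*(2*ε - 2*ε^2/3 - 100*ε^3)^4) := by ring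
      _ ≤ (1+ε) - (1+ε)*Real.exp (-(2*ε - 2*ε^2/3 - 100*ε^3)) := by linarith
      _ = (1+ε) * (1 - Real.exp (-(2*ε - 2*ε^2/3 - 100*ε^3))) := by ring
  have hHv : (1+ε) * (1 - Real.exp (-(2*ε - 2*ε^2/3 + 100*ε^3)))
      < 2*ε - 2*ε^2/3 + 100*ε^3 := by
    have h1' : 1 - (2*ε - 2*ε^2/3 + 100*ε^3) + (2*ε - 2*ε^2/3 + 100*ε^3)^2/2
        - (2*ε - 2*ε^2/3 + 100*ε^3)^3/6 - 5/96*(2*ε - 2*ε^2/3 + 100*ε^3)^4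
        ≤ Real.exp (-(2*ε - 2*ε^2/3 + 100*ε^3)) := by linarith [hexpv.1]
    have hmul := mul_le_mul_of_nonneg_left h1' h1ε.le
    calc (1+ε) * (1 - Real.exp (-(2*ε - 2*ε^2/3 + 100*ε^3)))
        = (1+ε) - (1+ε)*Real.exp (-(2*ε - 2*ε^2/3 + 100*ε^3)) := by ring
      _ ≤ (1+ε) - (1+ε)*(1 - (2*ε - 2*ε^2/3 + 100*ε^3) + (2*ε - 2*ε^2/3 + 100*ε^3)^2/2
            - (2*ε - 2*ε^2/3 + 100*ε^3)^3/6 - 5/96*(2*ε - 2*ε^2/3 + 100*ε^3)^4) := by linarith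
      _ = (1+ε)*((2*ε - 2*ε^2/3 + 100*ε^3) - (2*ε - 2*ε^2/3 + 100*ε^3)^2/2
            + (2*ε - 2*ε^2/3 + 100*ε^3)^3/6 + 5/96*(2*ε - 2*ε^2/3 + 100*ε^3)^4) := by ring
      _ < 2*ε - 2*ε^2/3 + 100*ε^3 := polyv' h0 h1
  have hcont : ContinuousOn (fun z : ℝ => (1+ε)*(1 - Real.exp (-z)) - z)
      (Set.Icc (2*ε - 2*ε^2/3 - 100*ε^3) (2*ε - 2*ε^2/3 + 100*ε^3)) := by fun_prop
  have hivt := intermediate_value_Icc' huv.le hcont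
  have h0mem : (0:ℝ) ∈ Set.Icc
      ((1+ε)*(1 - Real.exp (-(2*ε - 2*ε^2/3 + 100*ε^3))) - (2*ε - 2*ε^2/3 + 100*ε^3))
      ((1+ε)*(1 - Real.exp (-(2*ε - 2*ε^2/3 - 100*ε^3))) - (2*ε - 2*ε^2/3 - 100*ε^3)) :=
    ⟨by linarith, by linarith⟩
  obtain ⟨x, hxmem, hfx⟩ := hivt h0mem
  have hfx' : (1+ε)*(1 - Real.exp (-x)) - x = 0 := hfx
  have hxroot : x = (1+ε)*(1 - Real.exp (-x)) := by linarith
  have hxu : 2*ε - 2*ε^2/3 - 100*ε^3 ≤ x := hxmem.1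
  have hxv : x ≤ 2*ε - 2*ε^2/3 + 100*ε^3 := hxmem.2
  have hxIoo : x ∈ Set.Ioo (0:ℝ) 1 := ⟨by linarith, by linarith⟩
  have key : ∀ y : ℝ, y ∈ Set.Ioo (0:ℝ) 1 → y = (1+ε)*(1 - Real.exp (-y)) → y = x := by
    intro y hy hyr
    rcases lt_trichotomy y x with h | h | h
    · exact absurd h (uniq_root' h0 hy.1 hxIoo.1 hyr hxroot)
    · exact h
    · exact absurd h (uniq_root' h0 hxIoo.1 hy.1 hxroot hyr)
  refine ⟨⟨x, ⟨hxIoo, hxroot⟩, fun y hy => key y hy.1 hy.2⟩, ?_⟩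
  intro y hy hyr
  have hyx : y = x := key y hy hyr
  subst hyx
  have hx0 : (0:ℝ) < y := hxIoo.1
  constructor
  · rw [abs_le]; constructor <;> linarith
  · have hy2ε : y ≤ 2*ε := by nlinarith
    nlinarith [mul_nonneg hx0.le (by linarith : (0:ℝ) ≤ ε^2/3 + 50*ε^3 - ε + y/2),
      mul_nonneg hε2.le (by linarith : (0:ℝ) ≤ 2*ε - y),
      mul_nonneg hε3.le (by linarith : (0:ℝ) ≤ 2*ε - y),
      mul_nonneg hε3.le (by linarith : (0:ℝ) ≤ 1 - ε)]
end
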